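/- arXiv:2506.18250 — 2 statements merged into one kernel-verified Lean document; each statement's English description precedes it below -/
import Mathlib

section
/- (Dichotomy for final states, stepwise version.) Let f : X ⇀ X be a partial map on a metric space (X,d), a < b integers, F the restricted time extension on D_F with cost function c_d associated to d. Let G, B ⊆ {b} × X be disjoint subsets with G ⊔ B = {b} × X. Then for every ε ∈ [0,∞), D_F is the disjoint union of G_{F,ε} and B_{F,−ε}: every point of D_F either admits an ε-controlled path into G, or else every dead-end terminal state reachable from it by an ε-controlled path lies in B — and not both. -/
open scoped ENNReal

variable {Y : Type*}

/-- The domain of a partial map represented as `Y → Option Y`. -/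
def pdom {Y : Type*} (F : Y → Option Y) : Set Y := {y | F y ≠ none}

/-- `IsCtrlPath F c ε y A n` : `y` admits an `ε`-controlled path of length `n` into `A`. -/
def IsCtrlPath {Y : Type*} (F : Y → Option Y) (c : Y → Y → ℝ≥0∞) (ε : ℝ≥0∞)
    (y : Y) (A : Set Y) : ℕ → Prop
  | 0 => y ∈ A
  | (n + 1) => ∃ ys zs : ℕ → Y,
      (∀ i ≤ n, F (ys i) = some (zs i)) ∧
      c y (ys 0) ≤ ε ∧
      (∀ i < n, c (zs i) (ys (i + 1)) ≤ ε) ∧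
      zs n ∈ A

/-- `ε_Σ`-controlled path: total perturbation cost at most `ε`. -/
def IsSumCtrlPath {Y : Type*} (F : Y → Option Y) (c : Y → Y → ℝ≥0∞) (ε : ℝ≥0∞)
    (y : Y) (A : Set Y) : ℕ → Prop
  | 0 => y ∈ A
  | (n + 1) => ∃ ys zs : ℕ → Y,
      (∀ i ≤ n, F (ys i) = some (zs i)) ∧
      (c y (ys 0) + ∑ i ∈ Finset.range n, c (zs i) (ys (i + 1))) ≤ ε ∧
      zs n ∈ A

/-- The `ε`-attracting basin. -/
def basin {Y : Type*} (F : Y → Option Y) (c : Y → Y → ℝ≥0∞) (ε : ℝ≥0∞) (A : Set Y) : Set Y :=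
  {y | ∃ n, IsCtrlPath F c ε y A n}

/-- The `ε_Σ`-attracting basin. -/
def sumBasin {Y : Type*} (F : Y → Option Y) (c : Y → Y → ℝ≥0∞) (ε : ℝ≥0∞) (A : Set Y) : Set Y :=
  {y | ∃ n, IsSumCtrlPath F c ε y A n}

/-- The `-0`-attracting basin. -/
def negZeroBasin {Y : Type*} (F : Y → Option Y) (c : Y → Y → ℝ≥0∞) (A : Set Y) : Set Y :=
  basin F c 0 (A \ pdom F)

/-- The `-ε`-attracting basin. -/
def negBasin {Y : Type*} (F : Y → Option Y) (c : Y → Y → ℝ≥0∞) (ε : ℝ≥0∞) (A : Set Y) : Set Y :=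
  {y | y ∈ negZeroBasin F c A ∧
    ∀ y', y' ∉ pdom F → y ∈ basin F c ε ({y'} : Set Y) → y' ∈ A}

/-- The `-ε_Σ`-attracting basin. -/
def negSumBasin {Y : Type*} (F : Y → Option Y) (c : Y → Y → ℝ≥0∞) (ε : ℝ≥0∞) (A : Set Y) : Set Y :=
  {y | y ∈ sumBasin F c 0 (A \ pdom F) ∧
    ∀ y', y' ∉ pdom F → y ∈ sumBasin F c ε ({y'} : Set Y) → y' ∈ A}



/-- Iteration of a partial map `f : X → Option X`. -/
def iterOpt {X : Type*} (f : X → Option X) : ℕ → X → Option X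
  | 0, x => some x
  | (n + 1), x => (iterOpt f n x).bind f

/-- The subset `D_F` of the time extension. -/
def DF {X : Type*} (f : X → Option X) (a b : ℤ) : Set (ℤ × X) :=
  {p | ∃ n : ℕ, (n : ℤ) ≤ b - a ∧ p.1 = b - (n : ℤ) ∧ (iterOpt f n p.2).isSome}

open Classical in
/-- The restriction `F` of the time extension `f̃(t,x) = (t+1, f(x))` to `D_F`. -/
noncomputable def FF {X : Type*} (f : X → Option X) (a b : ℤ) :
    ↥(DF f a b) → Option ↥(DF f a b) :=
  fun p =>
    if h : ∃ q : ↥(DF f a b),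
        (q : ℤ × X).1 = (p : ℤ × X).1 + 1 ∧ f (p : ℤ × X).2 = some (q : ℤ × X).2 then
      some h.choose
    else none

/-- The cost function on `D_F` associated to the metric `d`. -/
noncomputable def cd {X : Type*} [MetricSpace X] (f : X → Option X) (a b : ℤ) :
    ↥(DF f a b) → ↥(DF f a b) → ℝ≥0∞ :=
  fun p q =>
    if (p : ℤ × X).1 = (q : ℤ × X).1 then edist (p : ℤ × X).2 (q : ℤ × X).2 else ⊤

/-!
The terminal states of `F` are exactly the points at time `b`, so `G` and `B` split them.
A point with an `ε`-controlled path into `G` cannot lie in `B_{F,-ε}`, since the endpoint of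
that path is a terminal state outside `B`. Conversely, if a point has no `ε`-controlled path
into `G`, then every terminal state it reaches by an `ε`-controlled path lies in `B`; in
particular so does the endpoint of its uncontrolled orbit (a `0`-controlled path, as
`c_d(p, p) = 0`), which reaches time `b` because `fⁿ(x)` is defined.
-/

namespace IsCtrlPath

variable {F : Y → Option Y} {c : Y → Y → ℝ≥0∞} {ε ε' : ℝ≥0∞} {y z : Y} {A A' : Set Y} {n : ℕ}

theorem mono (hε : ε ≤ ε') (hA : A ⊆ A') (h : IsCtrlPath F c ε y A n) :
    IsCtrlPath F c ε' y A' n := by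
  cases n with
  | zero => exact hA h
  | succ n =>
    obtain ⟨ys, zs, hstep, hstart, hjump, hend⟩ := h
    exact ⟨ys, zs, hstep, hstart.trans hε, fun i hi => (hjump i hi).trans hε, hA hend⟩

theorem exists_singleton (h : IsCtrlPath F c ε y A n) :
    ∃ q ∈ A, IsCtrlPath F c ε y {q} n := by
  cases n with
  | zero => exact ⟨y, h, rfl⟩
  | succ n =>
    obtain ⟨ys, zs, hstep, hstart, hjump, hend⟩ := h
    exact ⟨zs n, hend, ys, zs, hstep, hstart, hjump, rfl⟩

theorem cons (hy : c y y ≤ ε) (hyz : F y = some z) (h : IsCtrlPath F c ε z A n) :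
    IsCtrlPath F c ε y A (n + 1) := by
  cases n with
  | zero =>
    exact ⟨fun _ => y, fun _ => z, fun _ _ => hyz, hy, fun i hi => absurd hi i.not_lt_zero, h⟩
  | succ n =>
    obtain ⟨ys, zs, hstep, hstart, hjump, hend⟩ := h
    refine ⟨fun | 0 => y | j + 1 => ys j, fun | 0 => z | j + 1 => zs j, ?_, hy, ?_, hend⟩
    · rintro (_ | j) hj
      exacts [hyz, hstep j (by omega)]
    · rintro (_ | j) hj
      exacts [hstart, hjump j (by omega)]

end IsCtrlPath

section Basin

variable {F : Y → Option Y} {c : Y → Y → ℝ≥0∞} {ε ε' : ℝ≥0∞} {y z : Y} {A A' : Set Y}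

theorem basin_mono (hε : ε ≤ ε') (hA : A ⊆ A') : basin F c ε A ⊆ basin F c ε' A' :=
  fun _ ⟨n, h⟩ => ⟨n, h.mono hε hA⟩

theorem exists_mem_basin_singleton (h : y ∈ basin F c ε A) :
    ∃ q ∈ A, y ∈ basin F c ε {q} := by
  obtain ⟨n, h⟩ := h
  obtain ⟨q, hq, h⟩ := h.exists_singleton
  exact ⟨q, hq, n, h⟩

theorem mem_basin_of_eq_some (hy : c y y ≤ ε) (hyz : F y = some z) (hz : z ∈ basin F c ε A) :
    y ∈ basin F c ε A :=
  let ⟨n, h⟩ := hz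
  ⟨n + 1, h.cons hy hyz⟩

theorem disjoint_basin_negBasin {G B : Set Y} (hG : G ⊆ (pdom F)ᶜ) (hGB : Disjoint G B) :
    Disjoint (basin F c ε G) (negBasin F c ε B) := by
  refine Set.disjoint_left.mpr fun y hyG hyB => ?_
  obtain ⟨q, hqG, hyq⟩ := exists_mem_basin_singleton hyG
  exact Set.disjoint_left.mp hGB hqG (hyB.2 q (hG hqG) hyq)

theorem basin_union_negBasin_eq_univ {G B : Set Y} (hcov : (pdom F)ᶜ ⊆ G ∪ B)
    (hterm : ∀ y, y ∈ basin F c 0 (pdom F)ᶜ) :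
    basin F c ε G ∪ negBasin F c ε B = Set.univ := by
  refine Set.eq_univ_of_forall fun y => or_iff_not_imp_left.mpr fun hyG => ?_
  have hB : ∀ q ∉ pdom F, y ∈ basin F c ε {q} → q ∈ B := fun q hq hyq =>
    (hcov hq).resolve_left fun hqG => hyG (basin_mono le_rfl (by simpa using hqG) hyq)
  obtain ⟨q, hq, hyq⟩ := exists_mem_basin_singleton (hterm y)
  refine ⟨basin_mono le_rfl ?_ hyq, hB⟩
  simpa using ⟨hB q hq (basin_mono zero_le le_rfl hyq), hq⟩

end Basin

section TimeExtension

variable {X : Type*} {f : X → Option X} {a b : ℤ}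

theorem iterOpt_succ' (n : ℕ) (x : X) : iterOpt f (n + 1) x = (f x).bind (iterOpt f n) := by
  induction n generalizing x with
  | zero => simp [iterOpt]
  | succ n ih =>
    change (iterOpt f (n + 1) x).bind f = _
    rw [ih, Option.bind_assoc]
    rfl

theorem exists_FF_eq_some (p : DF f a b) (hp : (p : ℤ × X).1 ≠ b) :
    ∃ q, FF f a b p = some q ∧ (q : ℤ × X).1 = (p : ℤ × X).1 + 1 := by
  obtain ⟨_ | m, hn, ht, hs⟩ := p.2
  · omega
  rw [iterOpt_succ'] at hs
  obtain ⟨x', hfx, hx'⟩ : ∃ x', f (p : ℤ × X).2 = some x' ∧ (iterOpt f m x').isSome := by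
    cases hfx : f (p : ℤ × X).2 <;> simp_all
  have hex : ∃ q : DF f a b,
      (q : ℤ × X).1 = (p : ℤ × X).1 + 1 ∧ f (p : ℤ × X).2 = some (q : ℤ × X).2 :=
    ⟨⟨((p : ℤ × X).1 + 1, x'), m, by omega, by simp only at ht ⊢; omega, hx'⟩, rfl, hfx⟩
  exact ⟨hex.choose, by rw [FF, dif_pos hex], hex.choose_spec.1⟩

theorem compl_pdom_FF : (pdom (FF f a b))ᶜ = {p : DF f a b | (p : ℤ × X).1 = b} := by
  ext p
  simp only [pdom, Set.mem_compl_iff, Set.mem_ofPred_eq, not_not]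
  constructor
  · intro hp
    by_contra hpb
    obtain ⟨q, hq, -⟩ := exists_FF_eq_some p hpb
    simp [hq] at hp
  · intro hpb
    rw [FF, dif_neg]
    rintro ⟨⟨q, n, _, hqt, _⟩, hq, _⟩
    simp only at hq
    omega

theorem cd_self [MetricSpace X] (p : DF f a b) : cd f a b p p = 0 := by
  simp [cd]

theorem mem_basin_zero_compl_pdom_FF [MetricSpace X] (p : DF f a b) :
    p ∈ basin (FF f a b) (cd f a b) 0 (pdom (FF f a b))ᶜ := by
  obtain ⟨n, -, ht, -⟩ := p.2
  induction n generalizing p with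
  | zero =>
    refine ⟨0, ?_⟩
    rw [IsCtrlPath, compl_pdom_FF]
    simpa using ht
  | succ n ih =>
    obtain ⟨q, hpq, hqt⟩ := exists_FF_eq_some p (by omega)
    exact mem_basin_of_eq_some (cd_self p).le hpq (ih q (by push_cast at ht; omega))

end TimeExtension

theorem stmt13_general {X : Type*} [MetricSpace X] (f : X → Option X) (a b : ℤ)
    (G B : Set ↥(DF f a b)) (hGB : Disjoint G B)
    (hcov : G ∪ B = {p : ↥(DF f a b) | (p : ℤ × X).1 = b})
    (ε : ℝ≥0∞) :
    basin (FF f a b) (cd f a b) ε G ∪ negBasin (FF f a b) (cd f a b) ε B = Set.univ ∧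
    Disjoint (basin (FF f a b) (cd f a b) ε G) (negBasin (FF f a b) (cd f a b) ε B) := by
  rw [← compl_pdom_FF] at hcov
  exact ⟨basin_union_negBasin_eq_univ hcov.ge mem_basin_zero_compl_pdom_FF,
    disjoint_basin_negBasin (hcov ▸ Set.subset_union_left) hGB⟩

theorem stmt13 {X : Type*} [MetricSpace X] (f : X → Option X) (a b : ℤ) (hab : a < b)
    (G B : Set ↥(DF f a b)) (hGB : Disjoint G B)
    (hcov : G ∪ B = {p : ↥(DF f a b) | (p : ℤ × X).1 = b})
    (ε : ℝ≥0∞) (hε : ε ≠ ⊤) :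
    basin (FF f a b) (cd f a b) ε G ∪ negBasin (FF f a b) (cd f a b) ε B = Set.univ ∧
    Disjoint (basin (FF f a b) (cd f a b) ε G) (negBasin (FF f a b) (cd f a b) ε B) :=
  stmt13_general f a b G B hGB hcov ε
end

section
/- (Dichotomy for final states, total-cost version.) With the same setting of the time-extended partial map F on D_F with cost function c_d, and disjoint G, B with G ⊔ B = {b} × X = D_F ∖ dom(F): for every ε ∈ [0,∞), D_F = G_{F,ε_Σ} ⊔ B_{F,−ε_Σ}. -/
open scoped ENNReal

variable {Y : Type*}

/-!
Every state reaches a dead end along the unperturbed orbit, and the dead ends are exactly the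
final states `{b} × X = G ⊔ B`. A state that cannot reach `G` with total perturbation `ε` in
particular does not reach `G` unperturbed, so its orbit ends in `B`, and every dead end it can
reach with budget `ε` lies in `B`; this gives the covering. Conversely a state reaching some
`z ∈ G` with budget `ε` cannot belong to `B_{F,-ε_Σ}`, since that would force `z ∈ B`.
-/

namespace IsSumCtrlPath

variable {Z : Type*} {F : Z → Option Z} {c : Z → Z → ℝ≥0∞} {ε ε' : ℝ≥0∞} {A A' : Set Z}
  {y : Z} {n : ℕ}

theorem mono (hε : ε ≤ ε') (hA : A ⊆ A') (h : IsSumCtrlPath F c ε y A n) :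
    IsSumCtrlPath F c ε' y A' n := by
  cases n with
  | zero => exact hA h
  | succ n =>
    obtain ⟨ys, zs, hstep, hcost, hend⟩ := h
    exact ⟨ys, zs, hstep, hcost.trans hε, hA hend⟩

end IsSumCtrlPath

section SumBasin

variable {Z : Type*} {F : Z → Option Z} {c : Z → Z → ℝ≥0∞} {ε ε' : ℝ≥0∞} {A A' : Set Z}

theorem sumBasin_mono (hε : ε ≤ ε') (hA : A ⊆ A') : sumBasin F c ε A ⊆ sumBasin F c ε' A' :=
  fun _ ⟨n, hn⟩ => ⟨n, hn.mono hε hA⟩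

theorem exists_mem_sumBasin_singleton {y : Z} (h : y ∈ sumBasin F c ε A) :
    ∃ z ∈ A, y ∈ sumBasin F c ε {z} := by
  obtain ⟨n, hn⟩ := h
  cases n with
  | zero => exact ⟨y, hn, 0, rfl⟩
  | succ n =>
    obtain ⟨ys, zs, hstep, hcost, hend⟩ := hn
    exact ⟨zs n, hend, n + 1, ys, zs, hstep, hcost, rfl⟩

theorem mem_sumBasin_of_eq_some (hc : ∀ y, c y y = 0) {p q : Z} (hpq : F p = some q)
    (hq : q ∈ sumBasin F c ε A) : p ∈ sumBasin F c ε A := by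
  obtain ⟨n, hn⟩ := hq
  cases n with
  | zero => exact ⟨1, fun _ => p, fun _ => q, fun _ _ => hpq, by simp [hc], hn⟩
  | succ n =>
    obtain ⟨ys, zs, hstep, hcost, hend⟩ := hn
    refine ⟨n + 2, fun i => if i = 0 then p else ys (i - 1),
      fun i => if i = 0 then q else zs (i - 1), ?_, ?_, by simpa using hend⟩
    · rintro (_ | i) hi
      · simpa using hpq
      · simpa using hstep i (by omega)
    · simpa [hc, Finset.sum_range_succ', add_comm] using hcost

theorem exists_notMem_pdom_mem_sumBasin_zero (hc : ∀ y, c y y = 0) (r : Z → ℕ)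
    (hr : ∀ p q, F p = some q → r q < r p) (y : Z) :
    ∃ z ∉ pdom F, y ∈ sumBasin F c 0 {z} := by
  induction hy : r y using Nat.strong_induction_on generalizing y with
  | _ k ih =>
    cases hFy : F y with
    | none => exact ⟨y, fun h => h hFy, 0, rfl⟩
    | some q =>
      obtain ⟨z, hz, hqz⟩ := ih (r q) (hy ▸ hr y q hFy) q rfl
      exact ⟨z, hz, mem_sumBasin_of_eq_some hc hFy hqz⟩

theorem sumBasin_union_negSumBasin (hreach : ∀ y, ∃ z ∉ pdom F, y ∈ sumBasin F c 0 {z})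
    {G B : Set Z} (hdead : (pdom F)ᶜ ⊆ G ∪ B) :
    sumBasin F c ε G ∪ negSumBasin F c ε B = Set.univ := by
  refine Set.eq_univ_of_forall fun y => or_iff_not_imp_left.2 fun hyG => ⟨?_, ?_⟩
  · obtain ⟨z, hz, hyz⟩ := hreach y
    rcases hdead hz with hzG | hzB
    · exact absurd (sumBasin_mono zero_le (Set.singleton_subset_iff.2 hzG) hyz) hyG
    · exact sumBasin_mono le_rfl (Set.singleton_subset_iff.2 (Set.mem_sdiff_of_mem hzB hz)) hyz
  · intro z hz hyz
    rcases hdead hz with hzG | hzB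
    · exact absurd (sumBasin_mono le_rfl (Set.singleton_subset_iff.2 hzG) hyz) hyG
    · exact hzB

theorem disjoint_sumBasin_negSumBasin {G B : Set Z} (hGB : Disjoint G B)
    (hG : G ⊆ (pdom F)ᶜ) : Disjoint (sumBasin F c ε G) (negSumBasin F c ε B) := by
  refine Set.disjoint_left.2 fun y hyG hyB => ?_
  obtain ⟨z, hzG, hyz⟩ := exists_mem_sumBasin_singleton hyG
  exact Set.disjoint_left.1 hGB hzG (hyB.2 z (hG hzG) hyz)

end SumBasin

section TimeExtension

variable {X : Type*} {f : X → Option X} {a b : ℤ}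

theorem fst_le_of_mem_DF {p : ℤ × X} (hp : p ∈ DF f a b) : p.1 ≤ b := by
  obtain ⟨n, -, ht, -⟩ := hp
  omega

theorem fst_FF_of_eq_some {p q : DF f a b} (h : FF f a b p = some q) :
    (q : ℤ × X).1 = (p : ℤ × X).1 + 1 := by
  rw [FF] at h
  split_ifs at h with hq
  exact Option.some_injective _ h ▸ hq.choose_spec.1

theorem FF_eq_none_of_fst_eq {p : DF f a b} (hp : (p : ℤ × X).1 = b) : FF f a b p = none := by
  cases h : FF f a b p with
  | none => rfl
  | some q =>
    have := fst_le_of_mem_DF q.2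
    have := fst_FF_of_eq_some h
    omega

/-- A non-final point `(b - (m+1), x)` of `D_F` has `f x = some y` with `(b - m, y) ∈ D_F`. -/
theorem exists_FF_eq_some_of_fst_ne {p : DF f a b} (hp : (p : ℤ × X).1 ≠ b) :
    ∃ q, FF f a b p = some q := by
  obtain ⟨_ | m, hn, ht, hiter⟩ := p.2
  · exact absurd (by simpa using ht) hp
  rw [iterOpt_succ'] at hiter
  obtain ⟨y, hy⟩ := Option.isSome_iff_exists.1 (Option.isSome_of_isSome_bind hiter)
  rw [hy, Option.bind_some] at hiter
  have hmem : ((p : ℤ × X).1 + 1, y) ∈ DF f a b := ⟨m, by omega, by simp only; omega, hiter⟩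
  rw [FF, dif_pos ⟨⟨_, hmem⟩, rfl, hy⟩]
  exact ⟨_, rfl⟩

theorem exists_final_mem_sumBasin_zero [MetricSpace X] (p : DF f a b) :
    ∃ z ∉ pdom (FF f a b), p ∈ sumBasin (FF f a b) (cd f a b) 0 {z} :=
  exists_notMem_pdom_mem_sumBasin_zero cd_self (fun q => (b - (q : ℤ × X).1).toNat)
    (fun p q hpq => by
      have := fst_le_of_mem_DF q.2
      have := fst_FF_of_eq_some hpq
      omega) p

end TimeExtension

theorem stmt14_general {X : Type*} [MetricSpace X] (f : X → Option X) (a b : ℤ)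
    (G B : Set ↥(DF f a b)) (hGB : Disjoint G B)
    (hcov : G ∪ B = {p : ↥(DF f a b) | (p : ℤ × X).1 = b})
    (ε : ℝ≥0∞) :
    sumBasin (FF f a b) (cd f a b) ε G ∪ negSumBasin (FF f a b) (cd f a b) ε B = Set.univ ∧
    Disjoint (sumBasin (FF f a b) (cd f a b) ε G)
      (negSumBasin (FF f a b) (cd f a b) ε B) := by
  have hdead : (pdom (FF f a b))ᶜ = G ∪ B := by rw [compl_pdom_FF, hcov]
  exact ⟨sumBasin_union_negSumBasin exists_final_mem_sumBasin_zero hdead.le,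
    disjoint_sumBasin_negSumBasin hGB (hdead ▸ Set.subset_union_left)⟩

theorem stmt14 {X : Type*} [MetricSpace X] (f : X → Option X) (a b : ℤ) (hab : a < b)
    (G B : Set ↥(DF f a b)) (hGB : Disjoint G B)
    (hcov : G ∪ B = {p : ↥(DF f a b) | (p : ℤ × X).1 = b})
    (ε : ℝ≥0∞) (hε : ε ≠ ⊤) :
    sumBasin (FF f a b) (cd f a b) ε G ∪ negSumBasin (FF f a b) (cd f a b) ε B = Set.univ ∧
    Disjoint (sumBasin (FF f a b) (cd f a b) ε G)
      (negSumBasin (FF f a b) (cd f a b) ε B) :=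
  stmt14_general f a b G B hGB hcov ε
end
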